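/- arXiv:1606.05692 — 7 statements merged into one kernel-verified Lean document; each statement's English description precedes it below -/
import Mathlib

section
/- Let A be a unital ring, e an idempotent of A, and X a subset of the corner eAe. If ann_r(X) = fA for some idempotent f ∈ A, then the right annihilator of X computed within the corner ring eAe is ann_r(X) ∩ eAe = (efe)(eAe), which is generated by an idempotent of eAe. Consequently, if A is Baer then every corner eAe is Baer. -/
theorem stmt4_aux (A : Type*) [Ring A] (e : A) (he : e * e = e) (X : Set A)
    (hX : ∀ x ∈ X, e * x * e = x) (f : A) (hf : f * f = f)
    (hann : {a : A | ∀ x ∈ X, x * a = 0} = {y : A | ∃ b : A, y = f * b}) :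
    (e * f * e) * (e * f * e) = e * f * e ∧
      {a : A | (∀ x ∈ X, x * a = 0) ∧ e * a * e = a} =
        {y : A | ∃ b : A, e * b * e = b ∧ y = (e * f * e) * b} := by
  have hxf : ∀ x ∈ X, x * f = 0 := by
    intro x hx
    have hmem : f ∈ {y : A | ∃ b : A, y = f * b} := ⟨f, hf.symm⟩
    rw [← hann] at hmem
    exact hmem x hx
  have hxe : ∀ x ∈ X, x * e = x := by
    intro x hx
    conv_lhs => rw [← hX x hx]
    rw [mul_assoc, mul_assoc, he, ← mul_assoc, hX x hx]
  have hefe_ann : ∀ x ∈ X, x * (e * f * e) = 0 := by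
    intro x hx
    rw [← mul_assoc, ← mul_assoc, hxe x hx, hxf x hx, zero_mul]
  have hmem : (e * f * e) ∈ {y : A | ∃ b : A, y = f * b} := by
    rw [← hann]; exact hefe_ann
  obtain ⟨b0, hb0⟩ := hmem
  have hfefe : f * (e * f * e) = e * f * e := by
    rw [hb0, ← mul_assoc, hf]
  have hidem : (e * f * e) * (e * f * e) = e * f * e := by
    calc (e * f * e) * (e * f * e) = e * (f * (e * f * e)) := by
          rw [mul_assoc, mul_assoc]
          rw [show e * (e * f * e) = e * f * e from by rw [← mul_assoc, ← mul_assoc, he]]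
      _ = e * (e * f * e) := by rw [hfefe]
      _ = e * f * e := by rw [← mul_assoc, ← mul_assoc, he]
  refine ⟨hidem, ?_⟩
  ext a
  simp only [Set.mem_setOf_eq]
  constructor
  · rintro ⟨hann_a, hea⟩
    have haA : a ∈ {y : A | ∃ b : A, y = f * b} := by rw [← hann]; exact hann_a
    obtain ⟨c, hc⟩ := haA
    have hea' : e * a = a := by
      conv_lhs => rw [← hea]
      rw [← mul_assoc, ← mul_assoc, he, hea]
    have hfa : f * a = a := by rw [hc, ← mul_assoc, hf]
    refine ⟨a, hea, ?_⟩
    rw [mul_assoc, mul_assoc, hea', hfa, hea']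
  · rintro ⟨b, hbe, rfl⟩
    constructor
    · intro x hx
      rw [← mul_assoc, hefe_ann x hx, zero_mul]
    · have hbe' : b * e = b := by
        conv_lhs => rw [← hbe]
        rw [mul_assoc, he, hbe]
      have hee : e * (e * f * e) = e * f * e := by rw [← mul_assoc, ← mul_assoc, he]
      rw [← mul_assoc, hee, mul_assoc, hbe']

/-- Annihilators in corners: if `X ⊆ eAe` and `ann_r(X) = fA`, then the right annihilator of
`X` in the corner `eAe` is generated by the idempotent `efe` of `eAe`; consequently every
corner of a Baer ring is Baer. -/
theorem stmt4 (A : Type*) [Ring A] (e : A) (he : e * e = e) (X : Set A)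
    (hX : ∀ x ∈ X, e * x * e = x) (f : A) (hf : f * f = f)
    (hann : {a : A | ∀ x ∈ X, x * a = 0} = {y : A | ∃ b : A, y = f * b}) :
    ((e * f * e) * (e * f * e) = e * f * e ∧
      {a : A | (∀ x ∈ X, x * a = 0) ∧ e * a * e = a} =
        {y : A | ∃ b : A, e * b * e = b ∧ y = (e * f * e) * b}) ∧
    ((∀ Y : Set A, ∃ g : A, g * g = g ∧
        {a : A | ∀ x ∈ Y, x * a = 0} = {y : A | ∃ b : A, y = g * b}) →
      ∀ Y : Set A, (∀ x ∈ Y, e * x * e = x) →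
        ∃ g : A, e * g * e = g ∧ g * g = g ∧
          {a : A | (∀ x ∈ Y, x * a = 0) ∧ e * a * e = a} =
            {y : A | ∃ b : A, e * b * e = b ∧ y = g * b}) := by
  refine ⟨stmt4_aux A e he X hX f hf hann, ?_⟩
  intro hBaer Y hY
  obtain ⟨f', hf', hann'⟩ := hBaer Y
  obtain ⟨hid, hset⟩ := stmt4_aux A e he Y hY f' hf' hann'
  refine ⟨e * f' * e, ?_, hid, hset⟩
  rw [mul_assoc, mul_assoc, he, ← mul_assoc, ← mul_assoc, he]
end

section
/- A unital ring A with no infinite set of nonzero pairwise orthogonal idempotents is right Rickart if and only if it is Baer. -/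
/-!
Idempotents are partially ordered by `e ≤ f ↔ f * e = e ∧ e * f = e`, and a strictly
decreasing sequence `e₀ > e₁ > ⋯` yields the infinite family of nonzero pairwise orthogonal
idempotents `eₙ - eₙ₊₁`; so the hypothesis makes this order well founded. In a right Rickart
ring the right annihilator of every finite set is generated by an idempotent: if
`ann_r(S) = eA` and `ann_r(x e) = fA`, then `ann_r(S ∪ {x}) = e f A`. For arbitrary `X`, pick
`e` minimal among the idempotents generating `ann_r(F)` with `F ⊆ X` finite. Adding one more
`x ∈ X` to `F` gives a generator `g` with `g A ⊆ e A`; then `g e ≤ e` generates the same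
annihilator, so `g e = e` by minimality, and hence `e A = ann_r(X)`.
-/

@[ext]
structure Idempotent (A : Type*) [Semigroup A] where
  val : A
  isIdempotentElem : IsIdempotentElem val

theorem OrthogonalIdempotents.injective {R I : Type*} [Semiring R] {e : I → R}
    (he : OrthogonalIdempotents e) (hne : ∀ i, e i ≠ 0) : Function.Injective e := by
  intro i j hij
  by_contra h
  apply hne i
  calc e i = e i * e j := by rw [← hij, (he.idem i).eq]
    _ = 0 := he.ortho h

namespace Idempotent

variable {A : Type*}

section Semigroup

variable [Semigroup A]

instance : PartialOrder (Idempotent A) where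
  le e f := f.val * e.val = e.val ∧ e.val * f.val = e.val
  le_refl e := ⟨e.isIdempotentElem, e.isIdempotentElem⟩
  le_trans e f g hef hfg :=
    ⟨by rw [← hef.1, ← mul_assoc, hfg.1], by rw [← hef.2, mul_assoc, hfg.2]⟩
  le_antisymm e f hef hfe := Idempotent.ext (hef.2.symm.trans hfe.1)

end Semigroup

variable [Ring A]

theorem isIdempotentElem_sub_of_le {e f : Idempotent A} (h : e ≤ f) :
    IsIdempotentElem (f.val - e.val) := by
  rw [IsIdempotentElem, sub_mul, mul_sub, mul_sub, h.1, h.2, f.isIdempotentElem.eq,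
    e.isIdempotentElem.eq]
  abel

theorem sub_mul_sub_eq_zero {p q r r' : Idempotent A} (hpr : p ≤ r) (hpr' : p ≤ r')
    (hqr : q ≤ r) (hqr' : q ≤ r') :
    (r.val - r'.val) * (p.val - q.val) = 0 ∧ (p.val - q.val) * (r.val - r'.val) = 0 := by
  constructor
  · rw [sub_mul, mul_sub, mul_sub, hpr.1, hpr'.1, hqr.1, hqr'.1]
    abel
  · rw [sub_mul, mul_sub, mul_sub, hpr.2, hpr'.2, hqr.2, hqr'.2]
    abel

theorem orthogonalIdempotents_sub_succ {s : ℕ → Idempotent A} (hs : Antitone s) :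
    OrthogonalIdempotents fun n => (s n).val - (s (n + 1)).val := by
  refine ⟨fun n => isIdempotentElem_sub_of_le (hs n.le_succ), fun m n hmn => ?_⟩
  have below {i j : ℕ} (hij : i < j) :=
    sub_mul_sub_eq_zero (hs hij.le) (hs hij) (hs (by omega : i ≤ j + 1)) (hs (by omega))
  rcases hmn.lt_or_gt with h | h
  · exact (below h).1
  · exact (below h).2

theorem wellFoundedLT
    (h : ¬ ∃ S : Set A, S.Infinite ∧ (∀ e ∈ S, e * e = e ∧ e ≠ 0) ∧
      (∀ e ∈ S, ∀ f ∈ S, e ≠ f → e * f = 0 ∧ f * e = 0)) :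
    WellFoundedLT (Idempotent A) := by
  refine ⟨wellFounded_iff_isEmpty_descending_chain.2 ⟨fun ⟨s, hs⟩ => h ?_⟩⟩
  have hg := orthogonalIdempotents_sub_succ (strictAnti_nat_of_succ_lt hs).antitone
  have hne (n : ℕ) : (s n).val - (s (n + 1)).val ≠ 0 :=
    sub_ne_zero.2 fun heq => (hs n).ne (Idempotent.ext heq.symm)
  refine ⟨_, Set.infinite_range_of_injective (hg.injective hne), ?_, ?_⟩
  · rintro _ ⟨n, rfl⟩
    exact ⟨hg.idem n, hne n⟩
  · rintro _ ⟨m, rfl⟩ _ ⟨n, rfl⟩ hne_val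
    have hmn : m ≠ n := fun hmn => hne_val (by rw [hmn])
    exact ⟨hg.ortho hmn, hg.ortho hmn.symm⟩

end Idempotent

section RightAnnihilator

variable {A : Type*} [Ring A]

/-- `ann_r(X) = e A`, stated through `e A = {a | e * a = a}` for idempotent `e`. -/
def GeneratesRightAnnihilator (X : Set A) (e : A) : Prop :=
  IsIdempotentElem e ∧ ∀ a, (∀ x ∈ X, x * a = 0) ↔ e * a = a

theorem generatesRightAnnihilator_iff {X : Set A} {e : A} :
    GeneratesRightAnnihilator X e ↔
      e * e = e ∧ {a : A | ∀ x ∈ X, x * a = 0} = {y : A | ∃ b : A, y = e * b} := by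
  refine and_congr_right fun he => ?_
  have mem_iff (y : A) : (∃ b, y = e * b) ↔ e * y = y :=
    ⟨fun ⟨b, hb⟩ => by rw [hb, ← mul_assoc, he.eq], fun h => ⟨y, h.symm⟩⟩
  simp only [Set.ext_iff, Set.mem_ofPred_eq, mem_iff]

namespace GeneratesRightAnnihilator

theorem empty : GeneratesRightAnnihilator (∅ : Set A) 1 :=
  ⟨.one, by simp⟩

theorem mul_eq_of_subset {S T : Set A} {e g : A} (hST : S ⊆ T)
    (he : GeneratesRightAnnihilator S e) (hg : GeneratesRightAnnihilator T g) : e * g = g :=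
  (he.2 g).1 fun x hx => (hg.2 g).2 hg.1.eq x (hST hx)

theorem mul_right {S : Set A} {e g : A} (hg : GeneratesRightAnnihilator S g)
    (heg : e * g = g) : GeneratesRightAnnihilator S (g * e) := by
  refine ⟨by rw [IsIdempotentElem, mul_assoc, ← mul_assoc e, heg, ← mul_assoc, hg.1.eq],
    fun a => ?_⟩
  rw [hg.2 a, mul_assoc]
  constructor
  · intro ha
    rw [← ha, ← mul_assoc e, heg, ← mul_assoc, hg.1.eq]
  · intro ha
    calc g * a = g * (g * (e * a)) := by rw [ha]
      _ = a := by rw [← mul_assoc, hg.1.eq, ha]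

theorem insert_mul {S : Set A} {x e f : A} (he : GeneratesRightAnnihilator S e)
    (hf : GeneratesRightAnnihilator {x * e} f) :
    GeneratesRightAnnihilator (insert x S) (e * f) := by
  have hf_ann (a : A) : x * e * a = 0 ↔ f * a = a := by simpa using hf.2 a
  have hfe : f * e = f - 1 + e := by
    have h := (hf_ann (1 - e)).1 <| by
      rw [mul_assoc, mul_sub, mul_one, he.1.eq, sub_self, mul_zero]
    rw [mul_sub, mul_one] at h
    rw [← sub_sub_cancel f (f * e), h]
    abel
  refine ⟨?_, fun a => ?_⟩
  · calc e * f * (e * f) = e * (f * e) * f := by simp only [mul_assoc]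
      _ = e * f := by
        rw [hfe, mul_add, mul_sub, mul_one, he.1.eq, sub_add_cancel, mul_assoc, hf.1.eq]
  simp only [Set.forall_mem_insert, he.2]
  constructor
  · rintro ⟨hxa, hea⟩
    rw [mul_assoc, (hf_ann a).1 (by rw [mul_assoc, hea, hxa]), hea]
  · intro ha
    have hea : e * a = a := by rw [← ha, ← mul_assoc, ← mul_assoc, he.1.eq]
    have hfa : f * a = a :=
      calc f * a = f * e * (f * a) := by rw [mul_assoc, ← mul_assoc e, ha]
        _ = a := by rw [hfe, add_mul, sub_mul, one_mul, ← mul_assoc, hf.1.eq, ← mul_assoc, ha,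
          sub_self, zero_add]
    exact ⟨by rw [← hea, ← mul_assoc, (hf_ann a).2 hfa], hea⟩

end GeneratesRightAnnihilator

open GeneratesRightAnnihilator

theorem exists_generatesRightAnnihilator_of_finite
    (hR : ∀ x : A, ∃ e, GeneratesRightAnnihilator {x} e) {F : Set A} (hF : F.Finite) :
    ∃ e, GeneratesRightAnnihilator F e := by
  induction F, hF using Set.Finite.induction_on with
  | empty => exact ⟨1, empty⟩
  | @insert x _ _ _ ih =>
    obtain ⟨e, he⟩ := ih
    obtain ⟨f, hf⟩ := hR (x * e)
    exact ⟨_, he.insert_mul hf⟩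

theorem exists_generatesRightAnnihilator [WellFoundedLT (Idempotent A)]
    (hR : ∀ x : A, ∃ e, GeneratesRightAnnihilator {x} e) (X : Set A) :
    ∃ e, GeneratesRightAnnihilator X e := by
  obtain ⟨e, hmin⟩ := WellFoundedLT.exists_minimal ‹_›
    {e : Idempotent A | ∃ F ⊆ X, F.Finite ∧ GeneratesRightAnnihilator F e.val}
    ⟨⟨1, .one⟩, ∅, Set.empty_subset X, Set.finite_empty, empty⟩
  obtain ⟨F, hFX, hF, he⟩ := hmin.prop
  refine ⟨e.val, e.isIdempotentElem, fun a =>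
    ⟨fun ha => (he.2 a).1 fun x hx => ha x (hFX hx), fun ha x hx => ?_⟩⟩
  obtain ⟨g, hg⟩ := exists_generatesRightAnnihilator_of_finite hR (hF.insert x)
  have heg := he.mul_eq_of_subset (Set.subset_insert x F) hg
  have hge := hg.mul_right heg
  have hge_eq : (⟨g * e.val, hge.1⟩ : Idempotent A) = e :=
    hmin.eq_of_le ⟨insert x F, Set.insert_subset hx hFX, hF.insert x, hge⟩
      ⟨show e.val * (g * e.val) = _ by rw [← mul_assoc, heg],
        show g * e.val * e.val = _ by rw [mul_assoc, e.isIdempotentElem.eq]⟩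
  rw [← hge_eq] at ha
  exact (hge.2 a).2 ha x (Set.mem_insert x F)

end RightAnnihilator

/-- A unital ring with no infinite set of nonzero pairwise orthogonal idempotents is right
Rickart iff it is Baer. -/
theorem stmt5 (A : Type*) [Ring A]
    (h : ¬ ∃ S : Set A, S.Infinite ∧ (∀ e ∈ S, e * e = e ∧ e ≠ 0) ∧
      (∀ e ∈ S, ∀ f ∈ S, e ≠ f → e * f = 0 ∧ f * e = 0)) :
    (∀ x : A, ∃ e : A, e * e = e ∧ {a : A | x * a = 0} = {y : A | ∃ b : A, y = e * b}) ↔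
    (∀ X : Set A, ∃ e : A, e * e = e ∧
      {a : A | ∀ x ∈ X, x * a = 0} = {y : A | ∃ b : A, y = e * b}) := by
  have singleton_iff (x e : A) : GeneratesRightAnnihilator {x} e ↔
      e * e = e ∧ {a : A | x * a = 0} = {y : A | ∃ b : A, y = e * b} := by
    simp only [generatesRightAnnihilator_iff, Set.mem_singleton_iff, forall_eq]
  have := Idempotent.wellFoundedLT h
  simp only [← singleton_iff, ← generatesRightAnnihilator_iff]
  exact ⟨exists_generatesRightAnnihilator, fun hB x => hB {x}⟩
end

section
/- Let A be a locally unital right semihereditary ring. Then for every idempotent u ∈ A and every x ∈ uAu, the right annihilator of x in the corner uAu is a direct summand of uAu as a right uAu-module. In particular A is locally right Rickart. -/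
/-!
For `x` in the corner `uAu`, a splitting of the surjection `A → xA` gives a map `t`, right
`A`-linear on `xA`, with `x * t x = x`. Then `w = u (t x) u` is an idempotent of `uAu` with
`x w = x`, and for `a ∈ uAu` we have `w a = u t (x a)`, so `x` and `w` have the same right
annihilator in `uAu`. The right annihilator of the idempotent `w` in `uAu` is `(u - w) uAu`.
-/

namespace IsIdempotentElem

variable {A : Type*} [NonUnitalRing A] {u : A}

theorem mul_corner_eq (hu : IsIdempotentElem u) {a : A} (ha : u * a * u = a) :
    u * a = a := by
  rw [← ha, ← mul_assoc, ← mul_assoc, hu.eq]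

theorem corner_mul_eq (hu : IsIdempotentElem u) {a : A} (ha : u * a * u = a) :
    a * u = a := by
  rw [← ha, mul_assoc, hu.eq]

theorem sub_of_corner (hu : IsIdempotentElem u) {w : A} (hw : IsIdempotentElem w)
    (hwc : u * w * u = w) : IsIdempotentElem (u - w) := by
  have hwl := hu.mul_corner_eq hwc
  have hwr := hu.corner_mul_eq hwc
  rw [IsIdempotentElem, sub_mul, mul_sub, mul_sub, hu.eq, hwl, hwr, hw.eq, sub_self, sub_zero]

theorem sub_mem_corner (hu : IsIdempotentElem u) {w : A} (hwc : u * w * u = w) :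
    u * (u - w) * u = u - w := by
  rw [mul_sub, hu.eq, hu.mul_corner_eq hwc, sub_mul, hu.eq, hu.corner_mul_eq hwc]

theorem rightAnn_corner_eq (hu : IsIdempotentElem u) {w : A} (hw : IsIdempotentElem w)
    (hwc : u * w * u = w) :
    {a : A | u * a * u = a ∧ w * a = 0} = {y : A | ∃ b : A, u * b * u = b ∧ y = (u - w) * b} := by
  have hwr := hu.corner_mul_eq hwc
  ext a
  constructor
  · rintro ⟨hau, hwa⟩
    exact ⟨a, hau, by rw [sub_mul, hu.mul_corner_eq hau, hwa, sub_zero]⟩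
  · rintro ⟨b, hbu, rfl⟩
    refine ⟨?_, ?_⟩
    · have hvu : u * (u - w) = u - w := hu.mul_corner_eq (hu.sub_mem_corner hwc)
      rw [← mul_assoc, hvu, mul_assoc, hu.corner_mul_eq hbu]
    · rw [← mul_assoc, mul_sub, hwr, hw.eq, sub_self, zero_mul]

theorem exists_corner_rightAnn_eq (hu : IsIdempotentElem u) {x : A} (hx : u * x * u = x)
    (t : A → A) (hxt : x * t x = x) (ht : ∀ r, t (x * r) = t x * r) :
    ∃ w : A, u * w * u = w ∧ IsIdempotentElem w ∧
      {a : A | u * a * u = a ∧ x * a = 0} = {a : A | u * a * u = a ∧ w * a = 0} := by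
  set w := u * t x * u with hw_def
  have hxu := hu.corner_mul_eq hx
  have hwc : u * w * u = w := by
    rw [hw_def, ← mul_assoc, ← mul_assoc, hu.eq, mul_assoc _ u u, hu.eq]
  have hxw : x * w = x := by rw [hw_def, ← mul_assoc, ← mul_assoc, hxu, hxt, hxu]
  have hwa : ∀ a, u * a = a → w * a = u * t (x * a) := fun a hua => by
    rw [hw_def, mul_assoc, hua, ht, mul_assoc]
  have hww : IsIdempotentElem w := by
    have htu : t x * u = t x := by rw [← ht, hxu]
    rw [IsIdempotentElem, hwa w (hu.mul_corner_eq hwc), hxw, hw_def, mul_assoc, htu]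
  refine ⟨w, hwc, hww, ?_⟩
  ext a
  refine and_congr_right fun hau => ⟨fun hxa => ?_, fun hwa0 => ?_⟩
  · have ht0 : t 0 = 0 := by simpa using ht 0
    rw [hwa a (hu.mul_corner_eq hau), hxa, ht0, mul_zero]
  · rw [← hxw, mul_assoc, hwa0, mul_zero]

end IsIdempotentElem

/-- Right semihereditary is encoded by: for every finitely generated right ideal `I = Σ xᵢA`,
the canonical surjection `Aⁿ → I` splits. -/
theorem stmt9_general (A : Type*) [NonUnitalRing A]
    (hSH : ∀ (n : ℕ) (x : Fin n → A), ∃ s : A → (Fin n → A),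
      (∀ a b : A, (∃ c : Fin n → A, a = ∑ i, x i * c i) →
        (∃ c : Fin n → A, b = ∑ i, x i * c i) → s (a + b) = s a + s b) ∧
      (∀ a : A, (∃ c : Fin n → A, a = ∑ i, x i * c i) → ∀ r : A,
        s (a * r) = fun i => s a i * r) ∧
      (∀ a : A, (∃ c : Fin n → A, a = ∑ i, x i * c i) → ∑ i, x i * s a i = a)) :
    ∀ u : A, u * u = u → ∀ x : A, u * x * u = x →
      ∃ e : A, u * e * u = e ∧ e * e = e ∧
        {a : A | u * a * u = a ∧ x * a = 0} =
          {y : A | ∃ b : A, u * b * u = b ∧ y = e * b} := by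
  intro u (hu : IsIdempotentElem u) x hx
  obtain ⟨s, -, hlin, hsec⟩ := hSH 1 (fun _ => x)
  have hxA : ∃ c : Fin 1 → A, x = ∑ i, (fun _ => x) i * c i :=
    ⟨fun _ => u, by simp [hu.corner_mul_eq hx]⟩
  obtain ⟨w, hwc, hw, hann⟩ := IsIdempotentElem.exists_corner_rightAnn_eq hu hx (fun a => s a 0)
    (by simpa using hsec x hxA) (fun r => congrFun (hlin x hxA r) 0)
  exact ⟨u - w, hu.sub_mem_corner hwc, hu.sub_of_corner hw hwc,
    hann.trans (hu.rightAnn_corner_eq hw hwc)⟩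

/-- A locally unital right semihereditary ring is locally right Rickart: in each corner `uAu`
the right annihilator of any element is a direct summand of `uAu` as a right module,
generated by an idempotent of the corner.  Right semihereditary is encoded by: for every
finitely generated right ideal `I = Σ xᵢA`, the canonical surjection `Aⁿ → I` splits. -/
theorem stmt9 (A : Type*) [NonUnitalRing A]
    (hLU : ∀ F : Finset A, ∃ u : A, u * u = u ∧ ∀ x ∈ F, u * x = x ∧ x * u = x)
    (hSH : ∀ (n : ℕ) (x : Fin n → A), ∃ s : A → (Fin n → A),
      (∀ a b : A, (∃ c : Fin n → A, a = ∑ i, x i * c i) →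
        (∃ c : Fin n → A, b = ∑ i, x i * c i) → s (a + b) = s a + s b) ∧
      (∀ a : A, (∃ c : Fin n → A, a = ∑ i, x i * c i) → ∀ r : A,
        s (a * r) = fun i => s a i * r) ∧
      (∀ a : A, (∃ c : Fin n → A, a = ∑ i, x i * c i) → ∑ i, x i * s a i = a)) :
    ∀ u : A, u * u = u → ∀ x : A, u * x * u = x →
      ∃ e : A, u * e * u = e ∧ e * e = e ∧
        {a : A | u * a * u = a ∧ x * a = 0} =
          {y : A | ∃ b : A, u * b * u = b ∧ y = e * b} :=
  stmt9_general A hSH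
end

section
/- Let A be a unital *-ring that is von Neumann regular and proper (xx* = 0 implies x = 0). Then for every x ∈ A there is a projection p with xA = pA; in particular A is a Rickart *-ring. -/
/-!
Let `w = x x*`. Regularity of the self-adjoint element `w²` provides a self-adjoint `y` with
`w² y w² = w²`, and properness lets us cancel: `a x x* = 0` forces `(a x)(a x)* = 0`, hence
`a x = 0`. Cancelling twice turns `w² y w² = w²` into `w y w x = x`, so `z = x* y w` is an inner
inverse of `x` with `x z = w y w` self-adjoint, and `x z` is the required projection. Applied to
`x*` and taking adjoints, it gives an inner inverse `z` with `z x` self-adjoint, and then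
`1 - z x` is a projection onto the right annihilator of `x`.
-/

theorem setOf_eq_mul_eq_setOf_eq_mul_mul_of_mul_mul_eq {S : Type*} [Semigroup S] {x z : S}
    (h : x * z * x = x) : {w : S | ∃ a, w = x * a} = {w : S | ∃ a, w = x * z * a} := by
  ext w
  constructor
  · rintro ⟨a, rfl⟩
    exact ⟨x * a, by rw [← mul_assoc, h]⟩
  · rintro ⟨a, rfl⟩
    exact ⟨z * a, mul_assoc x z a⟩

section InnerInverse

variable {A : Type*} [Ring A] {x z : A}

theorem setOf_mul_eq_zero_eq_setOf_eq_one_sub_mul_of_mul_mul_eq (h : x * z * x = x) :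
    {a : A | x * a = 0} = {w : A | ∃ a, w = (1 - z * x) * a} := by
  ext a
  constructor
  · intro (hxa : x * a = 0)
    exact ⟨a, by rw [sub_mul, one_mul, mul_assoc, hxa, mul_zero, sub_zero]⟩
  · rintro ⟨b, rfl⟩
    show x * ((1 - z * x) * b) = 0
    rw [← mul_assoc, mul_sub, mul_one, ← mul_assoc, h, sub_self, zero_mul]

variable [StarRing A]

theorem isStarProjection_mul_of_mul_mul_eq (h : x * z * x = x) (hs : IsSelfAdjoint (x * z)) :
    IsStarProjection (x * z) where
  isIdempotentElem := by rw [IsIdempotentElem, ← mul_assoc, h]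
  isSelfAdjoint := hs

theorem isStarProjection_one_sub_mul_of_mul_mul_eq (h : x * z * x = x)
    (hs : IsSelfAdjoint (z * x)) : IsStarProjection (1 - z * x) :=
  IsStarProjection.one_sub
    { isIdempotentElem := by rw [IsIdempotentElem, mul_assoc, ← mul_assoc x, h]
      isSelfAdjoint := hs }

end InnerInverse

section ProperRegular

variable {A : Type*} [Ring A] [StarRing A]

theorem mul_eq_zero_of_mul_mul_star_eq_zero (hproper : ∀ x : A, x * star x = 0 → x = 0)
    {a x : A} (h : a * x * star x = 0) : a * x = 0 :=
  hproper _ (by rw [star_mul, ← mul_assoc, h, zero_mul])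

theorem IsSelfAdjoint.exists_isSelfAdjoint_mul_mul_eq (hreg : ∀ x : A, ∃ y : A, x * y * x = x)
    {v : A} (hv : IsSelfAdjoint v) : ∃ y, IsSelfAdjoint y ∧ v * y * v = v := by
  obtain ⟨z, hz⟩ := hreg v
  have hz' : v * star z * v = v := by
    simpa only [star_mul, hv.star_eq, mul_assoc] using congrArg star hz
  refine ⟨z * v * star z, hv.conjugate z, ?_⟩
  calc v * (z * v * star z) * v = v * z * v * star z * v := by simp only [mul_assoc]
    _ = v := by rw [hz, hz']

theorem exists_mul_mul_eq_self_and_isSelfAdjoint_mul_right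
    (hreg : ∀ x : A, ∃ y : A, x * y * x = x) (hproper : ∀ x : A, x * star x = 0 → x = 0)
    (x : A) : ∃ z, x * z * x = x ∧ IsSelfAdjoint (x * z) := by
  set w := x * star x
  have hw : IsSelfAdjoint w := .mul_star_self x
  obtain ⟨y, hy, hwy⟩ := (IsSelfAdjoint.mul_star_self w).exists_isSelfAdjoint_mul_mul_eq hreg
  rw [hw.star_eq] at hwy
  have hwwyw : w * w * y * w = w := by
    have h := mul_eq_zero_of_mul_mul_star_eq_zero hproper (a := w * w * y - 1) (x := w)
      (by rw [hw.star_eq, mul_assoc, sub_mul, one_mul, hwy, sub_self])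
    rwa [sub_mul, one_mul, sub_eq_zero] at h
  have hwyww : w * y * w * w = w := by
    simpa only [star_mul, hw.star_eq, hy.star_eq, mul_assoc] using congrArg star hwwyw
  have hwywx : w * y * w * x = x := by
    have h := mul_eq_zero_of_mul_mul_star_eq_zero hproper (a := w * y * w - 1) (x := x)
      (by rw [mul_assoc, sub_mul, one_mul, hwyww, sub_self])
    rwa [sub_mul, one_mul, sub_eq_zero] at h
  have hxz : x * (star x * y * w) = w * y * w := by simp only [w, mul_assoc]
  refine ⟨star x * y * w, by rw [hxz, hwywx], ?_⟩
  rw [hxz]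
  simpa only [hw.star_eq] using hy.conjugate w

theorem exists_mul_mul_eq_self_and_isSelfAdjoint_mul_left
    (hreg : ∀ x : A, ∃ y : A, x * y * x = x) (hproper : ∀ x : A, x * star x = 0 → x = 0)
    (x : A) : ∃ z, x * z * x = x ∧ IsSelfAdjoint (z * x) := by
  obtain ⟨z, hz, hs⟩ := exists_mul_mul_eq_self_and_isSelfAdjoint_mul_right hreg hproper (star x)
  refine ⟨star z, ?_, ?_⟩
  · simpa only [star_mul, star_star, mul_assoc] using congrArg star hz
  · simpa only [IsSelfAdjoint, star_mul, star_star] using hs.star_eq.symm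

end ProperRegular

/-- A von Neumann regular proper unital `*`-ring has `xA = pA` for a projection `p`, for
every `x`; in particular it is a Rickart `*`-ring. -/
theorem stmt10 (A : Type*) [Ring A] [StarRing A]
    (hreg : ∀ x : A, ∃ y : A, x * y * x = x)
    (hproper : ∀ x : A, x * star x = 0 → x = 0) :
    (∀ x : A, ∃ p : A, p * p = p ∧ star p = p ∧
      {z : A | ∃ a : A, z = x * a} = {z : A | ∃ a : A, z = p * a}) ∧
    (∀ x : A, ∃ p : A, p * p = p ∧ star p = p ∧
      {a : A | x * a = 0} = {z : A | ∃ a : A, z = p * a}) := by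
  refine ⟨fun x => ?_, fun x => ?_⟩
  · obtain ⟨z, hz, hs⟩ := exists_mul_mul_eq_self_and_isSelfAdjoint_mul_right hreg hproper x
    have hp := isStarProjection_mul_of_mul_mul_eq hz hs
    exact ⟨x * z, hp.isIdempotentElem.eq, hp.isSelfAdjoint.star_eq,
      setOf_eq_mul_eq_setOf_eq_mul_mul_of_mul_mul_eq hz⟩
  · obtain ⟨z, hz, hs⟩ := exists_mul_mul_eq_self_and_isSelfAdjoint_mul_left hreg hproper x
    have hp := isStarProjection_one_sub_mul_of_mul_mul_eq hz hs
    exact ⟨1 - z * x, hp.isIdempotentElem.eq, hp.isSelfAdjoint.star_eq,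
      setOf_mul_eq_zero_eq_setOf_eq_one_sub_mul_of_mul_mul_eq hz⟩
end

section
/- Let A be a unital *-ring that is not *-symmetric, i.e., there exists x ∈ A such that 1 + xx* is not invertible. Then for every integer n > 1, the matrix ring Mₙ(A) with the *-transpose involution is not a Rickart *-ring. -/
/-!
Take `x` with `1 + x x*` not invertible and the idempotent `e = e₁₁ + x* e₂₁` of `Mₙ(A)`. The
right annihilator of `1 - e` is `e Mₙ(A)`; if it were `p Mₙ(A)` for a projection `p`, then
`p e = e` and `e p = p`; taking adjoints gives `p e* = p`, so `e = p e* e`. Since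
`e* e = (1 + x x*) e₁₁`, the `(1, 1)` entry reads `p₁₁ (1 + x x*) = 1`, and as `1 + x x*` is
self-adjoint, `p₁₁*` is also a right inverse.
-/

theorem mul_eq_and_mul_eq_of_setOf_mul_eq_zero_eq {R : Type*} [Ring R] {e p : R}
    (he : IsIdempotentElem e) (hp : IsIdempotentElem p)
    (h : {N : R | (1 - e) * N = 0} = {N : R | ∃ B, N = p * B}) :
    p * e = e ∧ e * p = p := by
  have he_mem : e ∈ {N : R | (1 - e) * N = 0} := by
    simp only [Set.mem_ofPred_eq, sub_mul, one_mul, he.eq, sub_self]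
  have hp_mem : p ∈ {N : R | (1 - e) * N = 0} := h ▸ ⟨1, (mul_one p).symm⟩
  rw [h] at he_mem
  obtain ⟨B, rfl⟩ := he_mem
  refine ⟨by rw [← mul_assoc, hp.eq], ?_⟩
  rw [Set.mem_ofPred_eq, sub_mul, one_mul, sub_eq_zero] at hp_mem
  exact hp_mem.symm

theorem eq_mul_star_mul_self_of_mul_eq {R : Type*} [Semigroup R] [StarMul R] {e p : R}
    (hp : IsSelfAdjoint p) (hpe : p * e = e) (hep : e * p = p) :
    e = p * (star e * e) := by
  have hp_star : p * star e = p := by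
    rw [← hp.star_eq, ← star_mul, hep]
  rw [← mul_assoc, hp_star, hpe]

theorem IsSelfAdjoint.isUnit_of_mul_eq_one {R : Type*} [Monoid R] [StarMul R] {a b : R}
    (hb : IsSelfAdjoint b) (h : a * b = 1) : IsUnit b := by
  refine isUnit_iff_exists_and_exists.2 ⟨⟨star a, ?_⟩, ⟨a, h⟩⟩
  rw [← hb.star_eq, ← star_mul, h, star_one]

namespace Matrix

variable {n : Type*} [Fintype n] [DecidableEq n]

theorem isIdempotentElem_single_add_single {A : Type*} [NonAssocSemiring A] {i j : n}
    (hij : i ≠ j) (x : A) : IsIdempotentElem (single i i (1 : A) + single j i x) := by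
  simp only [IsIdempotentElem, mul_add, add_mul, single_mul_single_same, mul_one,
    single_mul_single_of_ne, ne_eq, hij, not_false_eq_true, add_zero]

theorem star_mul_self_single_add_single {A : Type*} [NonAssocSemiring A] [StarRing A] {i j : n}
    (hij : i ≠ j) (x : A) :
    star (single i i (1 : A) + single j i (star x)) * (single i i 1 + single j i (star x)) =
      single i i (1 + x * star x) := by
  simp only [star_add, star_eq_conjTranspose, conjTranspose_single, star_one, star_star, mul_add,
    add_mul, single_mul_single_same, mul_one, single_mul_single_of_ne, ne_eq, hij, hij.symm,
    not_false_eq_true, add_zero, zero_add, single_add]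

end Matrix

open Matrix in
/-- If a unital `*`-ring `A` is not `*`-symmetric, then for every `n > 1` the matrix ring
`Mₙ(A)` with the `*`-transpose involution is not a Rickart `*`-ring. -/
theorem stmt12 (A : Type*) [Ring A] [StarRing A]
    (h : ∃ x : A, ¬ IsUnit (1 + x * star x)) (n : ℕ) (hn : 1 < n) :
    ¬ (∀ M : Matrix (Fin n) (Fin n) A, ∃ p : Matrix (Fin n) (Fin n) A,
        p * p = p ∧ star p = p ∧
        {N : Matrix (Fin n) (Fin n) A | M * N = 0} =
          {N : Matrix (Fin n) (Fin n) A | ∃ B : Matrix (Fin n) (Fin n) A, N = p * B}) := by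
  intro H
  obtain ⟨x, hx⟩ := h
  let i : Fin n := ⟨0, by omega⟩
  have hij : i ≠ ⟨1, hn⟩ := by simp [i, Fin.ext_iff]
  set e := single i i (1 : A) + single ⟨1, hn⟩ i (star x)
  obtain ⟨p, hpp, hps, hann⟩ := H (1 - e)
  obtain ⟨hpe, hep⟩ :=
    mul_eq_and_mul_eq_of_setOf_mul_eq_zero_eq (isIdempotentElem_single_add_single hij _) hpp hann
  have he := eq_mul_star_mul_self_of_mul_eq hps hpe hep
  rw [star_mul_self_single_add_single hij] at he
  have hinv : p i i * (1 + x * star x) = 1 := by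
    simpa [e, mul_single_apply_same, single_apply_of_row_ne hij.symm] using
      (congr_fun₂ he i i).symm
  exact hx (((IsSelfAdjoint.one A).add (.mul_star_self x)).isUnit_of_mul_eq_one hinv)
end

section
/- Let A be a unital *-ring which is *-symmetric (1 + xx* is invertible for all x). Then for every idempotent e ∈ A there exists a projection p with eA = pA. Consequently, a *-symmetric ring is right Rickart if and only if it is a Rickart *-ring. -/
/-!
For an idempotent `e`, the element `z = 1 + (e - e⋆)(e - e⋆)⋆` is self-adjoint, commutes with
`e` and `e⋆`, and satisfies `e z = e e⋆ e`. When `z` is invertible, `p = e e⋆ z⁻¹` is therefore a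
projection with `p e = e` and `e p = p`, so `eA = pA`. In a `*`-symmetric ring every such `z` is
invertible; applying this to the idempotents generating right annihilators turns a right Rickart
ring into a Rickart `*`-ring.
-/

open scoped Ring

theorem Commute.ringInverse_left {M₀ : Type*} [MonoidWithZero M₀] {a b : M₀} (ha : IsUnit a)
    (h : Commute a b) : Commute a⁻¹ʳ b := by
  obtain ⟨u, rfl⟩ := ha
  rw [Ring.inverse_unit]
  exact h.units_inv_left

theorem setOf_exists_mul_eq_of_mul_eq {S : Type*} [Semigroup S] {e p : S} (hpe : p * e = e)
    (hep : e * p = p) : {y : S | ∃ a : S, y = e * a} = {y : S | ∃ a : S, y = p * a} := by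
  ext y
  constructor
  · rintro ⟨a, rfl⟩
    exact ⟨e * a, by rw [← mul_assoc, hpe]⟩
  · rintro ⟨a, rfl⟩
    exact ⟨p * a, by rw [← mul_assoc, hep]⟩

section StarRing

variable {A : Type*} [Ring A] [StarRing A]

def starGap (e : A) : A := 1 + (e - star e) * star (e - star e)

theorem isSelfAdjoint_starGap (e : A) : IsSelfAdjoint (starGap e) := by
  simp only [starGap, IsSelfAdjoint, star_add, star_one, star_mul, star_star]

variable {e : A}

theorem starGap_eq_of_isIdempotentElem (he : IsIdempotentElem e) :
    starGap e = 1 - e - star e + e * star e + star e * e := by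
  simp only [starGap, star_sub, star_star, sub_mul, mul_sub, he.eq, he.star.eq]
  abel

theorem mul_starGap_of_isIdempotentElem (he : IsIdempotentElem e) :
    e * starGap e = e * star e * e := by
  simp only [starGap_eq_of_isIdempotentElem he, mul_add, mul_sub, mul_one, he.eq, ← mul_assoc]
  abel

theorem starGap_mul_of_isIdempotentElem (he : IsIdempotentElem e) :
    starGap e * e = e * star e * e := by
  simp only [starGap_eq_of_isIdempotentElem he, add_mul, sub_mul, one_mul, he.eq, mul_assoc]
  abel

theorem commute_starGap_of_isIdempotentElem (he : IsIdempotentElem e) :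
    Commute (starGap e) e :=
  (starGap_mul_of_isIdempotentElem he).trans (mul_starGap_of_isIdempotentElem he).symm

theorem commute_starGap_star_of_isIdempotentElem (he : IsIdempotentElem e) :
    Commute (starGap e) (star e) := by
  simpa only [(isSelfAdjoint_starGap e).star_eq] using
    (commute_starGap_of_isIdempotentElem he).star_star

theorem exists_isStarProjection_of_isIdempotentElem (he : IsIdempotentElem e)
    (hz : IsUnit (starGap e)) : ∃ p : A, IsStarProjection p ∧ p * e = e ∧ e * p = p := by
  set z := starGap e
  have hze : Commute z⁻¹ʳ e := (commute_starGap_of_isIdempotentElem he).ringInverse_left hz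
  have hze' : Commute z⁻¹ʳ (star e) :=
    (commute_starGap_star_of_isIdempotentElem he).ringInverse_left hz
  have hpe : e * star e * z⁻¹ʳ * e = e := by
    rw [mul_assoc, hze.eq, ← mul_assoc, ← mul_starGap_of_isIdempotentElem he,
      Ring.mul_inverse_cancel_right _ _ hz]
  refine ⟨e * star e * z⁻¹ʳ, ⟨?_, ?_⟩, hpe, ?_⟩
  · rw [IsIdempotentElem, ← mul_assoc, ← mul_assoc, hpe]
  · rw [IsSelfAdjoint, star_mul, star_mul, (isSelfAdjoint_starGap e).ringInverse.star_eq,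
      star_star, ← mul_assoc, hze.eq, mul_assoc, hze'.eq, ← mul_assoc]
  · rw [← mul_assoc, ← mul_assoc, he.eq]

end StarRing

/-- In a `*`-symmetric unital `*`-ring, every right ideal generated by an idempotent is
generated by a projection; consequently such a ring is right Rickart iff it is a
Rickart `*`-ring. -/
theorem stmt17 (A : Type*) [Ring A] [StarRing A]
    (h : ∀ x : A, IsUnit (1 + x * star x)) :
    (∀ e : A, e * e = e → ∃ p : A, p * p = p ∧ star p = p ∧
      {y : A | ∃ a : A, y = e * a} = {y : A | ∃ a : A, y = p * a}) ∧
    ((∀ x : A, ∃ e : A, e * e = e ∧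
        {a : A | x * a = 0} = {y : A | ∃ b : A, y = e * b}) ↔
     (∀ x : A, ∃ p : A, p * p = p ∧ star p = p ∧
        {a : A | x * a = 0} = {y : A | ∃ b : A, y = p * b})) := by
  have exists_projection_generating : ∀ e : A, e * e = e → ∃ p : A, p * p = p ∧ star p = p ∧
      {y : A | ∃ a : A, y = e * a} = {y : A | ∃ a : A, y = p * a} := by
    intro e he
    obtain ⟨p, ⟨hpp, hps⟩, hpe, hep⟩ := exists_isStarProjection_of_isIdempotentElem he (h _)
    exact ⟨p, hpp, hps, setOf_exists_mul_eq_of_mul_eq hpe hep⟩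
  refine ⟨exists_projection_generating, fun H x => ?_, fun H x => ?_⟩
  · obtain ⟨e, he, hx⟩ := H x
    obtain ⟨p, hpp, hps, hep⟩ := exists_projection_generating e he
    exact ⟨p, hpp, hps, hx.trans hep⟩
  · obtain ⟨p, hpp, -, hx⟩ := H x
    exact ⟨p, hpp, hx⟩
end

section
/- Let R be a unital ring, p an idempotent of R, and φ : R → pRp a unital ring isomorphism, with * an involution on R such that φ is a *-isomorphism (so p is a projection). In the corner skew Laurent polynomial ring R[t₊, t₋, φ] with the involution satisfying (t₋ⁱ r)* = r* t₊ⁱ and (r t₊ⁱ)* = t₋ⁱ r*, if R is positive definite then R[t₊, t₋, φ] is positive definite. -/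
/-!
Multiplying on the left by a high power of `t₊` moves every element into the positive part
`∑ ι(dⱼ) t₊^(j+1)`; this loses nothing because `t₋ᴹ t₊ᴹ = 1`, and it preserves
`∑ xᵢ xᵢ* = 0` because `(t₊ᴹ x)(t₊ᴹ x)* = t₊ᴹ (x x*) t₋ᴹ`. In `y y*` for `y` in the positive part,
the products `ι(dⱼ) t₊^(j+1) t₋^(k+1) ι(dₖ*)` with `j ≠ k` are pure powers of `t₋` or `t₊` times
coefficients, so they have no constant term. For `j = k` the idempotent `t₊ᵏ t₋ᵏ` lies in `ι(R)`,
so with `ι(cⱼ) = ι(dⱼ) t₊ᵏ t₋ᵏ` the diagonal term is `ι(cⱼ cⱼ*)`. Positive definiteness of `R`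
forces every `cⱼ = 0`, and then `ι(dⱼ) t₊ᵏ = ι(cⱼ) t₊ᵏ = 0`.
-/

namespace CornerSkewLaurent

open Finset Filter

section Relations

variable {R S : Type*} [Ring R] [Ring S] {φ : R → R} {ι : R →+* S} {tp tm : S}

theorem pow_mul_map (h4 : ∀ r, tp * ι r = ι (φ r) * tp) (k : ℕ) (r : R) :
    tp ^ k * ι r = ι (φ^[k] r) * tp ^ k := by
  induction k generalizing r with
  | zero => simp
  | succ k ih =>
    rw [pow_succ', mul_assoc, ih, ← mul_assoc, h4, mul_assoc, ← pow_succ',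
      Function.iterate_succ_apply']

theorem map_mul_pow (h3 : ∀ r, ι r * tm = tm * ι (φ r)) (k : ℕ) (r : R) :
    ι r * tm ^ k = tm ^ k * ι (φ^[k] r) := by
  induction k generalizing r with
  | zero => simp
  | succ k ih =>
    rw [pow_succ', ← mul_assoc, h3, mul_assoc, ih, ← mul_assoc, ← pow_succ',
      Function.iterate_succ_apply]

theorem pow_mul_pow_mem_range {p : R} (h2 : tp * tm = ι p)
    (h4 : ∀ r, tp * ι r = ι (φ r) * tp) (k : ℕ) : tp ^ k * tm ^ k ∈ ι.range := by
  induction k with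
  | zero => simp
  | succ k ih =>
    have : tp ^ (k + 1) * tm ^ (k + 1) = ι (φ^[k] p) * (tp ^ k * tm ^ k) := by
      rw [pow_succ, pow_succ', ← mul_assoc, mul_assoc (tp ^ k), h2, pow_mul_map h4, mul_assoc]
    rw [this]
    exact mul_mem ⟨_, rfl⟩ ih

theorem exists_mul_pow_mul_pow_mul_eq_pow_mul {p : R} (h2 : tp * tm = ι p)
    (h3 : ∀ r, ι r * tm = tm * ι (φ r)) (h4 : ∀ r, tp * ι r = ι (φ r) * tp)
    {a b : ℕ} (hab : a < b) (r s : R) :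
    ∃ c, ι r * tp ^ a * (tm ^ b * ι s) = tm ^ (b - a) * ι c := by
  obtain ⟨q, hq⟩ := pow_mul_pow_mem_range h2 h4 a
  refine ⟨φ^[b - a] (r * q) * s, ?_⟩
  calc ι r * tp ^ a * (tm ^ b * ι s)
      = ι r * (tp ^ a * tm ^ a) * tm ^ (b - a) * ι s := by
        rw [← pow_mul_pow_sub tm hab.le]; simp only [mul_assoc]
    _ = tm ^ (b - a) * ι (φ^[b - a] (r * q) * s) := by
        rw [← hq, ← map_mul, map_mul_pow h3, mul_assoc, ← map_mul]

theorem exists_mul_pow_mul_pow_mul_eq_mul_pow {p : R} (h2 : tp * tm = ι p)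
    (h4 : ∀ r, tp * ι r = ι (φ r) * tp) {a b : ℕ} (hba : b < a) (r s : R) :
    ∃ c, ι r * tp ^ a * (tm ^ b * ι s) = ι c * tp ^ (a - b) := by
  obtain ⟨q, hq⟩ := pow_mul_pow_mem_range h2 h4 b
  refine ⟨r * φ^[a - b] (q * s), ?_⟩
  calc ι r * tp ^ a * (tm ^ b * ι s)
      = ι r * tp ^ (a - b) * (tp ^ b * tm ^ b) * ι s := by
        rw [← pow_sub_mul_pow tp hba.le]; simp only [mul_assoc]
    _ = ι (r * φ^[a - b] (q * s)) * tp ^ (a - b) := by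
        rw [← hq, mul_assoc, ← map_mul, mul_assoc, pow_mul_map h4, ← mul_assoc, ← map_mul]

theorem constantTerm_mul_pow_mul_pow_mul_eq_zero {p : R} (h2 : tp * tm = ι p)
    (h3 : ∀ r, ι r * tm = tm * ι (φ r)) (h4 : ∀ r, tp * ι r = ι (φ r) * tp) (π : S →+ R)
    (hpim : ∀ (i : ℕ) (r : R), π (tm ^ (i + 1) * ι r) = 0)
    (hpip : ∀ (i : ℕ) (r : R), π (ι r * tp ^ (i + 1)) = 0)
    {j k : ℕ} (hjk : j ≠ k) (r s : R) :
    π (ι r * tp ^ (j + 1) * (tm ^ (k + 1) * ι s)) = 0 := by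
  rcases hjk.lt_or_gt with h | h
  · obtain ⟨c, hc⟩ := exists_mul_pow_mul_pow_mul_eq_pow_mul h2 h3 h4 (Nat.succ_lt_succ h) r s
    rw [hc, ← Nat.sub_add_cancel (Nat.sub_pos_of_lt (Nat.succ_lt_succ h))]
    exact hpim _ _
  · obtain ⟨c, hc⟩ := exists_mul_pow_mul_pow_mul_eq_mul_pow h2 h4 (Nat.succ_lt_succ h) r s
    rw [hc, ← Nat.sub_add_cancel (Nat.sub_pos_of_lt (Nat.succ_lt_succ h))]
    exact hpip _ _

variable (ι tp) in
noncomputable def positivePart : AddSubmonoid S :=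
  AddMonoidHom.mrange <| Finsupp.liftAddHom fun j : ℕ ↦
    (AddMonoidHom.mulRight (tp ^ (j + 1))).comp (ι : R →+ S)

theorem map_mul_pow_mem_positivePart {k : ℕ} (hk : 0 < k) (r : R) :
    ι r * tp ^ k ∈ positivePart ι tp := by
  obtain ⟨j, rfl⟩ := Nat.exists_eq_add_one_of_ne_zero hk.ne'
  exact ⟨Finsupp.single j r, by simp⟩

theorem exists_eq_sum_of_mem_positivePart {y : S} (hy : y ∈ positivePart ι tp) :
    ∃ d : ℕ →₀ R, y = ∑ j ∈ d.support, ι (d j) * tp ^ (j + 1) := by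
  obtain ⟨d, rfl⟩ := hy
  exact ⟨d, Finsupp.liftAddHom_apply _ _⟩

theorem eventually_pow_mul_mem_positivePart {p : R} (h2 : tp * tm = ι p)
    (h4 : ∀ r, tp * ι r = ι (φ r) * tp)
    (hgen : ∀ s : S, ∃ (m : ℕ) (c : R) (a b : ℕ → R),
      s = ι c + (∑ i ∈ range m, tm ^ (i + 1) * ι (a i)) + ∑ i ∈ range m, ι (b i) * tp ^ (i + 1))
    (s : S) : ∀ᶠ M in atTop, tp ^ M * s ∈ positivePart ι tp := by
  obtain ⟨m, c, a, b, rfl⟩ := hgen s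
  filter_upwards [eventually_gt_atTop m] with M hM
  rw [mul_add, mul_add, mul_sum, mul_sum]
  refine add_mem (add_mem ?_ (sum_mem fun i hi ↦ ?_)) (sum_mem fun i _ ↦ ?_)
  · rw [pow_mul_map h4]
    exact map_mul_pow_mem_positivePart (by omega) _
  · have hiM : i + 1 < M := by have := mem_range.1 hi; omega
    obtain ⟨c, hc⟩ := exists_mul_pow_mul_pow_mul_eq_mul_pow h2 h4 hiM 1 (a i)
    rw [map_one, one_mul] at hc
    rw [hc]
    exact map_mul_pow_mem_positivePart (by omega) _
  · rw [← mul_assoc, pow_mul_map h4, mul_assoc, ← pow_add]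
    exact map_mul_pow_mem_positivePart (by omega) _

end Relations

theorem map_sum_mul_star_sum {S M α : Type*} [Ring S] [StarRing S] [AddCommMonoid M]
    (π : S →+ M) (s : Finset α) (z : α → S)
    (h : ∀ j ∈ s, ∀ k ∈ s, j ≠ k → π (z j * star (z k)) = 0) :
    π ((∑ j ∈ s, z j) * star (∑ j ∈ s, z j)) = ∑ j ∈ s, π (z j * star (z j)) := by
  rw [star_sum, sum_mul_sum, map_sum]
  refine sum_congr rfl fun j hj ↦ ?_
  rw [map_sum, sum_eq_single_of_mem j hj fun k hk hkj ↦ h j hj k hk hkj.symm]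

section Star

variable {R S : Type*} [Ring R] [StarRing R] [Ring S] [StarRing S]

theorem eq_zero_of_sum_mul_star_eq_zero
    (hR : ∀ (m : ℕ) (r : Fin m → R), ∑ i, r i * star (r i) = 0 → ∀ i, r i = 0)
    {α : Type*} (s : Finset α) (f : α → R) (h : ∑ a ∈ s, f a * star (f a) = 0) :
    ∀ a ∈ s, f a = 0 := by
  intro a ha
  have := hR _ (fun i ↦ f (s.equivFin.symm i)) <| by
    rw [← h, ← sum_coe_sort s]
    exact s.equivFin.symm.sum_comp fun a ↦ f a * star (f a)
  simpa using this (s.equivFin ⟨a, ha⟩)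

variable {φ : R → R} {ι : R →+* S} {tp tm : S}

theorem exists_mul_pow_eq_and_mul_star_eq {p : R} (h1 : tm * tp = 1) (h2 : tp * tm = ι p)
    (h4 : ∀ r, tp * ι r = ι (φ r) * tp) (hstart : star tp = tm)
    (hιstar : ∀ r, ι (star r) = star (ι r)) (k : ℕ) (r : R) :
    ∃ c, ι r * tp ^ k = ι c * tp ^ k ∧ ι r * tp ^ k * star (ι r * tp ^ k) = ι (c * star c) := by
  obtain ⟨q, hq⟩ := pow_mul_pow_mem_range h2 h4 k
  have hq_tp : ι q * tp ^ k = tp ^ k := by rw [hq, mul_assoc, pow_mul_pow_eq_one k h1, mul_one]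
  have hq_idem : ι q * ι q = ι q := by
    rw [hq, mul_assoc, ← mul_assoc (tm ^ k), pow_mul_pow_eq_one k h1, one_mul]
  have hz : ι r * tp ^ k = ι (r * q) * tp ^ k := by rw [map_mul, mul_assoc, hq_tp]
  refine ⟨r * q, hz, ?_⟩
  calc ι r * tp ^ k * star (ι r * tp ^ k)
      = ι (r * q) * (tp ^ k * tm ^ k) * ι (star (r * q)) := by
        rw [hz, star_mul, star_pow, hstart, ← hιstar]; simp only [mul_assoc]
    _ = ι (r * q * star (r * q)) := by
        rw [← hq, map_mul ι r q, mul_assoc (ι r), hq_idem, ← map_mul, ← map_mul]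

theorem eq_zero_of_mem_positivePart_of_sum_mul_star_eq_zero {p : R} (h1 : tm * tp = 1)
    (h2 : tp * tm = ι p) (h3 : ∀ r, ι r * tm = tm * ι (φ r))
    (h4 : ∀ r, tp * ι r = ι (φ r) * tp) (hstart : star tp = tm)
    (hιstar : ∀ r, ι (star r) = star (ι r)) (π : S →+ R) (hπι : ∀ r, π (ι r) = r)
    (hpim : ∀ (i : ℕ) (r : R), π (tm ^ (i + 1) * ι r) = 0)
    (hpip : ∀ (i : ℕ) (r : R), π (ι r * tp ^ (i + 1)) = 0)
    (hR : ∀ (m : ℕ) (r : Fin m → R), ∑ i, r i * star (r i) = 0 → ∀ i, r i = 0)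
    {α : Type*} [Fintype α] (y : α → S) (hy : ∀ i, y i ∈ positivePart ι tp)
    (h : ∑ i, y i * star (y i) = 0) : ∀ i, y i = 0 := by
  choose d hd using fun i ↦ exists_eq_sum_of_mem_positivePart (hy i)
  choose c hc hcc using exists_mul_pow_eq_and_mul_star_eq h1 h2 h4 hstart hιstar
  have hcross : ∀ (r s : R) (j k : ℕ), j ≠ k →
      π (ι r * tp ^ (j + 1) * star (ι s * tp ^ (k + 1))) = 0 := fun r s j k hjk ↦ by
    rw [star_mul, star_pow, hstart, ← hιstar]
    exact constantTerm_mul_pow_mul_pow_mul_eq_zero h2 h3 h4 π hpim hpip hjk r _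
  have hsum : ∑ ij ∈ univ.sigma fun i ↦ (d i).support,
      c (ij.2 + 1) (d ij.1 ij.2) * star (c (ij.2 + 1) (d ij.1 ij.2)) = 0 := by
    rw [sum_sigma, ← map_zero π, ← h, map_sum]
    refine sum_congr rfl fun i _ ↦ ?_
    rw [hd i, map_sum_mul_star_sum π _ _ fun j _ k _ hjk ↦ hcross _ _ j k hjk]
    exact sum_congr rfl fun j _ ↦ by rw [hcc, hπι]
  have hc0 := eq_zero_of_sum_mul_star_eq_zero hR _ _ hsum
  intro i
  rw [hd i]
  refine sum_eq_zero fun j hj ↦ ?_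
  rw [hc, hc0 ⟨i, j⟩ (mem_sigma.2 ⟨mem_univ i, hj⟩), map_zero, zero_mul]

end Star

end CornerSkewLaurent

theorem stmt19_general (R S : Type*) [Ring R] [StarRing R] [Ring S] [StarRing S]
    (p : R)
    (φ : R → R)
    (ι : R →+* S)
    (hιstar : ∀ r : R, ι (star r) = star (ι r))
    (tp tm : S)
    (h1 : tm * tp = 1) (h2 : tp * tm = ι p)
    (h3 : ∀ r : R, ι r * tm = tm * ι (φ r))
    (h4 : ∀ r : R, tp * ι r = ι (φ r) * tp)
    (hstart : star tp = tm)
    (hgen : ∀ s : S, ∃ (m : ℕ) (c : R) (a b : ℕ → R),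
      s = ι c + (∑ i ∈ Finset.range m, tm ^ (i + 1) * ι (a i)) +
        ∑ i ∈ Finset.range m, ι (b i) * tp ^ (i + 1))
    (π : S →+ R)
    (hπι : ∀ r : R, π (ι r) = r)
    (hpim : ∀ (i : ℕ) (r : R), π (tm ^ (i + 1) * ι r) = 0)
    (hpip : ∀ (i : ℕ) (r : R), π (ι r * tp ^ (i + 1)) = 0)
    (hR : ∀ (m : ℕ) (r : Fin m → R), ∑ i, r i * star (r i) = 0 → ∀ i, r i = 0) :
    ∀ (m : ℕ) (x : Fin m → S), ∑ i, x i * star (x i) = 0 → ∀ i, x i = 0 := by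
  intro m x hx
  obtain ⟨M, hM⟩ := (Filter.eventually_all.2 fun i ↦
    CornerSkewLaurent.eventually_pow_mul_mem_positivePart h2 h4 hgen (x i)).exists
  have hshift : ∑ i, tp ^ M * x i * star (tp ^ M * x i) = 0 :=
    calc ∑ i, tp ^ M * x i * star (tp ^ M * x i)
        = tp ^ M * (∑ i, x i * star (x i)) * tm ^ M := by
          simp only [star_mul, star_pow, hstart, Finset.mul_sum, Finset.sum_mul, mul_assoc]
      _ = 0 := by rw [hx, mul_zero, zero_mul]
  have hy := CornerSkewLaurent.eq_zero_of_mem_positivePart_of_sum_mul_star_eq_zero h1 h2 h3 h4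
    hstart hιstar π hπι hpim hpip hR _ hM hshift
  intro i
  rw [← one_mul (x i), ← pow_mul_pow_eq_one M h1, mul_assoc, hy i, mul_zero]

/-- A corner skew Laurent polynomial ring `S = R[tp,tm,φ]` over a positive definite `*`-ring
`R` is positive definite.  The ring `S` is axiomatized by: an embedding `ι : R → S`, elements
`tp, tm` satisfying `tmtp = 1`, `tptm = ι p`, `ι r · tm = tm · ι (φ r)`,
`tp · ι r = ι (φ r) · tp`, `(tp)* = tm`, where `φ` is a unital `*`-isomorphism of `R` onto
the corner `pRp`; every element of `S` is a finite sum
`ι c + Σ tmⁱ ι(aᵢ) + Σ ι(bⱼ) tpʲ`, and `π : S → R` is the additive "constant term" map. -/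
theorem stmt19 (R S : Type*) [Ring R] [StarRing R] [Ring S] [StarRing S]
    (p : R) (hp : p * p = p) (hpstar : star p = p)
    (φ : R → R)
    (hφadd : ∀ a b : R, φ (a + b) = φ a + φ b)
    (hφmul : ∀ a b : R, φ (a * b) = φ a * φ b)
    (hφone : φ 1 = p)
    (hφstar : ∀ a : R, φ (star a) = star (φ a))
    (hφinj : Function.Injective φ)
    (hφcorner : ∀ r : R, p * φ r * p = φ r)
    (hφsurj : ∀ x : R, p * x * p = x → ∃ r : R, φ r = x)
    (ι : R →+* S) (hι : Function.Injective ι)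
    (hιstar : ∀ r : R, ι (star r) = star (ι r))
    (tp tm : S)
    (h1 : tm * tp = 1) (h2 : tp * tm = ι p)
    (h3 : ∀ r : R, ι r * tm = tm * ι (φ r))
    (h4 : ∀ r : R, tp * ι r = ι (φ r) * tp)
    (hstart : star tp = tm)
    (hgen : ∀ s : S, ∃ (m : ℕ) (c : R) (a b : ℕ → R),
      s = ι c + (∑ i ∈ Finset.range m, tm ^ (i + 1) * ι (a i)) +
        ∑ i ∈ Finset.range m, ι (b i) * tp ^ (i + 1))
    (π : S →+ R)
    (hπι : ∀ r : R, π (ι r) = r)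
    (hpim : ∀ (i : ℕ) (r : R), π (tm ^ (i + 1) * ι r) = 0)
    (hpip : ∀ (i : ℕ) (r : R), π (ι r * tp ^ (i + 1)) = 0)
    (hR : ∀ (m : ℕ) (r : Fin m → R), ∑ i, r i * star (r i) = 0 → ∀ i, r i = 0) :
    ∀ (m : ℕ) (x : Fin m → S), ∑ i, x i * star (x i) = 0 → ∀ i, x i = 0 :=
  stmt19_general R S p φ ι hιstar tp tm h1 h2 h3 h4 hstart hgen π hπι hpim hpip hR
end
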